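/- Let ρ_λ^+ = λ|ψ₊⟩⟨ψ₊| + (1−λ)I/4 with |ψ₊⟩ = (|01⟩+|10⟩)/√2 and λ ∈ (0,1), and let U_x(θ) = e^{iθσ_x/2}. The SLD quantum Fisher information of the family θ ↦ (U_x(θ)⊗U_x(θ)) ρ_λ^+ (U_x(θ)⊗U_x(θ))† equals 8λ²/(1+λ), independently of θ. -/

import Mathlib

open Matrix Kronecker
noncomputable section

def σx : Matrix (Fin 2) (Fin 2) ℂ := !![0, 1; 1, 0]

/-- The Bell state `|ψ₊⟩ = (|01⟩ + |10⟩)/√2`. -/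
def ψplus : Fin 2 × Fin 2 → ℂ := fun p =>
  if p = (0, 1) then ((Real.sqrt 2)⁻¹ : ℝ) else if p = (1, 0) then ((Real.sqrt 2)⁻¹ : ℝ) else 0

/-- `ρ_λ^+ = λ|ψ₊⟩⟨ψ₊| + (1-λ)I/4`. -/
def rhoPlus (l : ℝ) : Matrix (Fin 2 × Fin 2) (Fin 2 × Fin 2) ℂ :=
  (l : ℂ) • vecMulVec ψplus (star ψplus) + (((1 - l) / 4 : ℝ) : ℂ) • 1

/-- `U_x(θ) = e^{iθσ_x/2}`. -/
def Ux (t : ℝ) : Matrix (Fin 2) (Fin 2) ℂ :=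
  NormedSpace.exp ((Complex.I * (t : ℂ) / 2) • σx)

/-!
The rotations form the one-parameter unitary group `V t = exp (t • G)` with
`G = (i/2)(σx ⊗ 1 + 1 ⊗ σx)`, so `ρ' = V (G ρ₀ + ρ₀ Gᴴ) Vᴴ`, and conjugating by `V` turns the
SLD equation into the one at `θ = 0` for `M = Vᴴ L V`. There `ψ₊` and `φ₊ = (|00⟩ + |11⟩)/√2` are
orthonormal eigenvectors of `ρ₀` with eigenvalues `p = (1 + 3λ)/4` and `q = (1 - λ)/4`, and
`G ψ₊ = i φ₊` gives `G ρ₀ + ρ₀ Gᴴ = iλ (|φ₊⟩⟨ψ₊| - |ψ₊⟩⟨φ₊|)`. Sandwiching the SLD equation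
between `ψ₊` and `φ₊` yields the two entries of `M` the trace sees, and
`Tr (L ρ') = 4λ² / (p + q) = 8λ² / (1 + λ)`.
-/

open NormedSpace

section Exponential

variable {m n : Type*} [Fintype m] [DecidableEq m] [Fintype n] [DecidableEq n]

attribute [local instance] Matrix.linftyOpNormedRing Matrix.linftyOpNormedAlgebra

theorem Matrix.exp_kronecker_one (A : Matrix m m ℂ) :
    exp A ⊗ₖ (1 : Matrix n n ℂ) = exp (A ⊗ₖ (1 : Matrix n n ℂ)) :=
  let f : Matrix m m ℂ →+* Matrix (m × n) (m × n) ℂ :=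
    { toFun := (· ⊗ₖ 1)
      map_one' := one_kronecker_one
      map_mul' := fun _ _ => by rw [← mul_kronecker_mul, one_mul]
      map_zero' := zero_kronecker _
      map_add' := fun _ _ => add_kronecker _ _ _ }
  map_exp (𝔹 := Matrix (m × n) (m × n) ℂ) f (continuous_pi fun _ => continuous_pi fun _ =>
    (continuous_id.matrix_elem _ _).mul continuous_const) A

theorem Matrix.exp_one_kronecker (B : Matrix n n ℂ) :
    (1 : Matrix m m ℂ) ⊗ₖ exp B = exp ((1 : Matrix m m ℂ) ⊗ₖ B) :=
  let f : Matrix n n ℂ →+* Matrix (m × n) (m × n) ℂ :=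
    { toFun := (1 ⊗ₖ ·)
      map_one' := one_kronecker_one
      map_mul' := fun _ _ => by rw [← mul_kronecker_mul, one_mul]
      map_zero' := kronecker_zero _
      map_add' := fun _ _ => kronecker_add _ _ _ }
  map_exp (𝔹 := Matrix (m × n) (m × n) ℂ) f (continuous_pi fun _ => continuous_pi fun _ =>
    continuous_const.mul (continuous_id.matrix_elem _ _)) B

theorem Matrix.exp_kronecker_exp (A : Matrix m m ℂ) (B : Matrix n n ℂ) :
    exp A ⊗ₖ exp B = exp (A ⊗ₖ (1 : Matrix n n ℂ) + (1 : Matrix m m ℂ) ⊗ₖ B) := by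
  have hcomm : Commute (A ⊗ₖ (1 : Matrix n n ℂ)) ((1 : Matrix m m ℂ) ⊗ₖ B) := by
    simp only [Commute, SemiconjBy, ← mul_kronecker_mul, one_mul, mul_one]
  rw [exp_add_of_commute _ _ hcomm, ← exp_kronecker_one, ← exp_one_kronecker, ← mul_kronecker_mul,
    one_mul, mul_one]

theorem Matrix.hasDerivAt_exp_smul_mul_mul_conjTranspose (G A : Matrix n n ℂ) (θ : ℝ) :
    HasDerivAt (fun t : ℝ => exp (t • G) * A * (exp (t • G))ᴴ)
      (exp (θ • G) * (G * A + A * Gᴴ) * (exp (θ • G))ᴴ) θ := by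
  have hstar : ∀ t : ℝ, (exp (t • G))ᴴ = exp (t • Gᴴ) := fun t => by
    rw [← exp_conjTranspose, conjTranspose_smul, star_trivial]
  simp only [hstar]
  refine (((hasDerivAt_exp_smul_const G θ).mul_const A).fun_mul
    (hasDerivAt_exp_smul_const' Gᴴ θ)).congr_deriv ?_
  noncomm_ring

theorem Matrix.exp_mem_unitary_of_conjTranspose_eq_neg {G : Matrix n n ℂ} (hG : Gᴴ = -G) :
    exp G ∈ unitary (Matrix n n ℂ) := by
  rw [Unitary.mem_iff, star_eq_conjTranspose, ← exp_conjTranspose, hG,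
    ← exp_add_of_commute _ _ (Commute.refl G).neg_left,
    ← exp_add_of_commute _ _ (Commute.refl G).neg_right, neg_add_cancel, add_neg_cancel, exp_zero]
  exact ⟨rfl, rfl⟩

theorem HasDerivAt.matrix_apply {f : ℝ → Matrix n n ℂ} {f' : Matrix n n ℂ} {θ : ℝ}
    (h : HasDerivAt f f' θ) (i j : n) : HasDerivAt (fun t => f t i j) (f' i j) θ :=
  (LinearMap.toContinuousLinearMap (entryLinearMap ℝ ℂ i j)).hasFDerivAt.comp_hasDerivAt θ h

end Exponential

section SLD

variable {n : Type*} [Fintype n]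

theorem Matrix.anticommutator_eq_of_unitary_conj [DecidableEq n] {V ρ L D : Matrix n n ℂ}
    (hV : V ∈ unitary (Matrix n n ℂ))
    (h : V * D * Vᴴ = (1 / 2 : ℂ) • (V * ρ * Vᴴ * L + L * (V * ρ * Vᴴ))) :
    ρ * (Vᴴ * L * V) + Vᴴ * L * V * ρ = (2 : ℂ) • D := by
  have hVV : Vᴴ * V = 1 := Unitary.star_mul_self_of_mem hV
  calc ρ * (Vᴴ * L * V) + Vᴴ * L * V * ρ
      = Vᴴ * (V * ρ * Vᴴ * L + L * (V * ρ * Vᴴ)) * V := by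
        simp only [mul_add, add_mul, ← mul_assoc, hVV, one_mul]
        simp only [mul_assoc, hVV, mul_one]
    _ = (2 : ℂ) • (Vᴴ * (V * D * Vᴴ) * V) := by
        rw [h, Matrix.mul_smul, Matrix.smul_mul, smul_smul]
        norm_num
    _ = (2 : ℂ) • D := by
        simp only [← mul_assoc, hVV, one_mul]
        simp only [mul_assoc, hVV, mul_one]

theorem Matrix.trace_mul_mul_mul_mul_comm {R : Type*} [CommSemiring R] (L V D W : Matrix n n R) :
    (L * (V * D * W)).trace = (W * L * V * D).trace := by
  rw [← mul_assoc, trace_mul_comm, ← mul_assoc, ← mul_assoc]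

theorem Matrix.trace_mul_rotation_of_anticommutator_eq {ρ M : Matrix n n ℂ} (hρ : ρ.IsHermitian)
    {u v : n → ℂ} {p q : ℝ} (hu : ρ *ᵥ u = (p : ℂ) • u) (hv : ρ *ᵥ v = (q : ℂ) • v)
    (huu : star u ⬝ᵥ u = 1) (hvv : star v ⬝ᵥ v = 1) (huv : star u ⬝ᵥ v = 0) (hpq : p + q ≠ 0)
    (c : ℂ)
    (hM : ρ * M + M * ρ = (2 : ℂ) • c • (vecMulVec v (star u) - vecMulVec u (star v))) :
    (M * (c • (vecMulVec v (star u) - vecMulVec u (star v)))).trace = -4 * c ^ 2 / (p + q) := by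
  have hvu : star v ⬝ᵥ u = 0 := by rw [star_dotProduct, huv, star_zero]
  have hleft : ∀ {x : n → ℂ} {r : ℝ}, ρ *ᵥ x = (r : ℂ) • x → star x ᵥ* ρ = (r : ℂ) • star x :=
    fun {x r} hx => by
      rw [← hρ.eq, ← star_mulVec, hx, star_smul, Complex.star_def, Complex.conj_ofReal]
  have hsandwich : ∀ {x y : n → ℂ} {r s : ℝ}, ρ *ᵥ x = (r : ℂ) • x → ρ *ᵥ y = (s : ℂ) • y →
      star x ⬝ᵥ (ρ * M + M * ρ) *ᵥ y = (r + s : ℂ) * (star x ⬝ᵥ M *ᵥ y) := fun {x y r s} hx hy => by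
    rw [add_mulVec, dotProduct_add, ← mulVec_mulVec, ← mulVec_mulVec, dotProduct_mulVec, hleft hx,
      hy, mulVec_smul, smul_dotProduct, dotProduct_smul, smul_eq_mul, smul_eq_mul, add_mul]
  -- Sandwiching `hM` between `u` and `v` determines the two entries of `M` that the trace sees.
  have huv' := hsandwich hu hv
  have hvu' := hsandwich hv hu
  rw [hM] at huv' hvu'
  simp only [smul_mulVec, sub_mulVec, vecMulVec_mulVec, dotProduct_smul, dotProduct_sub,
    smul_eq_mul, MulOpposite.smul_eq_mul_unop, MulOpposite.unop_op, huu, hvv, huv, hvu] at huv' hvu'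
  have hpq' : (p + q : ℂ) ≠ 0 := by exact_mod_cast hpq
  rw [Matrix.mul_smul, mul_sub, mul_vecMulVec, mul_vecMulVec, trace_smul, trace_sub,
    trace_vecMulVec, trace_vecMulVec, dotProduct_comm, dotProduct_comm (M *ᵥ u), smul_eq_mul,
    eq_div_iff hpq']
  linear_combination -c * huv' + c * hvu'

end SLD

def φplus : Fin 2 × Fin 2 → ℂ := fun p =>
  if p = (0, 0) then ((Real.sqrt 2)⁻¹ : ℝ) else if p = (1, 1) then ((Real.sqrt 2)⁻¹ : ℝ) else 0

def xGen : Matrix (Fin 2 × Fin 2) (Fin 2 × Fin 2) ℂ :=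
  ((Complex.I / 2) • σx) ⊗ₖ (1 : Matrix (Fin 2) (Fin 2) ℂ) +
    (1 : Matrix (Fin 2) (Fin 2) ℂ) ⊗ₖ ((Complex.I / 2) • σx)

theorem Ux_kronecker_Ux (t : ℝ) : Ux t ⊗ₖ Ux t = exp (t • xGen) := by
  have hUx : Ux t = exp (t • (Complex.I / 2) • σx) := by
    rw [Ux, ← smul_assoc, Complex.real_smul, mul_div_assoc', mul_comm (t : ℂ)]
  rw [hUx, exp_kronecker_exp, xGen, smul_add, smul_kronecker, kronecker_smul]

theorem conjTranspose_xGen : xGenᴴ = -xGen := by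
  ext ⟨a, b⟩ ⟨c, d⟩
  fin_cases a <;> fin_cases b <;> fin_cases c <;> fin_cases d <;>
    simp [xGen, σx, conjTranspose_apply, one_apply] <;> ring

theorem xGen_mulVec_ψplus : xGen *ᵥ ψplus = Complex.I • φplus := by
  ext ⟨a, b⟩
  fin_cases a <;> fin_cases b <;>
    simp [xGen, σx, ψplus, φplus, mulVec, dotProduct, Fintype.sum_prod_type, one_apply] <;> ring

theorem ofReal_inv_sqrt_two_mul_self : ((Real.sqrt 2)⁻¹ : ℂ) * ((Real.sqrt 2)⁻¹ : ℂ) = 1 / 2 := by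
  rw [← mul_inv, ← Complex.ofReal_mul, Real.mul_self_sqrt zero_le_two]
  norm_num

theorem star_ψplus_dotProduct_ψplus : star ψplus ⬝ᵥ ψplus = 1 := by
  norm_num [ψplus, dotProduct, Fintype.sum_prod_type, ofReal_inv_sqrt_two_mul_self]

theorem star_φplus_dotProduct_φplus : star φplus ⬝ᵥ φplus = 1 := by
  norm_num [φplus, dotProduct, Fintype.sum_prod_type, ofReal_inv_sqrt_two_mul_self]

theorem star_ψplus_dotProduct_φplus : star ψplus ⬝ᵥ φplus = 0 := by
  simp [ψplus, φplus, dotProduct, Fintype.sum_prod_type]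

open ComplexOrder in
theorem rhoPlus_isHermitian (l : ℝ) : (rhoPlus l).IsHermitian :=
  ((posSemidef_vecMulVec_self_star ψplus).isHermitian.smul (Complex.conj_ofReal l)).add
    (isHermitian_one.smul (Complex.conj_ofReal _))

theorem rhoPlus_mulVec_ψplus (l : ℝ) :
    rhoPlus l *ᵥ ψplus = (((1 + 3 * l) / 4 : ℝ) : ℂ) • ψplus := by
  simp only [rhoPlus, add_mulVec, smul_mulVec, vecMulVec_mulVec, star_ψplus_dotProduct_ψplus,
    one_mulVec, MulOpposite.op_one, one_smul, ← add_smul]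
  congr 1
  push_cast
  ring

theorem rhoPlus_mulVec_φplus (l : ℝ) :
    rhoPlus l *ᵥ φplus = (((1 - l) / 4 : ℝ) : ℂ) • φplus := by
  simp only [rhoPlus, add_mulVec, smul_mulVec, vecMulVec_mulVec, star_ψplus_dotProduct_φplus,
    one_mulVec, MulOpposite.op_zero, zero_smul, smul_zero, zero_add]

theorem xGen_mul_rhoPlus_add (l : ℝ) :
    xGen * rhoPlus l + rhoPlus l * xGenᴴ =
      (Complex.I * l) • (vecMulVec φplus (star ψplus) - vecMulVec ψplus (star φplus)) := by
  simp only [rhoPlus, mul_add, add_mul, Matrix.mul_smul, Matrix.smul_mul, mul_one, one_mul,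
    mul_vecMulVec, vecMulVec_mul, ← star_mulVec, xGen_mulVec_ψplus]
  rw [conjTranspose_xGen, star_smul, Complex.star_def, Complex.conj_I, smul_vecMulVec,
    vecMulVec_smul]
  module

theorem sld_fisher_rhoPlus_xRotation_general
    (l : ℝ) (hl : l ∈ Set.Ioo (0 : ℝ) 1)
    (ρ : ℝ → Matrix (Fin 2 × Fin 2) (Fin 2 × Fin 2) ℂ)
    (hρ : ∀ t : ℝ, ρ t = (Ux t ⊗ₖ Ux t) * rhoPlus l * (Ux t ⊗ₖ Ux t)ᴴ)
    (θ : ℝ) (ρ' : Matrix (Fin 2 × Fin 2) (Fin 2 × Fin 2) ℂ)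
    (hρ' : ∀ i j, HasDerivAt (fun t => ρ t i j) (ρ' i j) θ)
    (L : Matrix (Fin 2 × Fin 2) (Fin 2 × Fin 2) ℂ)
    (hSLD : ρ' = (1 / 2 : ℂ) • (ρ θ * L + L * ρ θ)) :
    ((L * ρ').trace).re = 8 * l ^ 2 / (1 + l) := by
  simp only [hρ, Ux_kronecker_Ux] at hρ' hSLD
  set V := exp (θ • xGen)
  have hV : V ∈ unitary _ :=
    exp_mem_unitary_of_conjTranspose_eq_neg (by rw [conjTranspose_smul, conjTranspose_xGen]; simp)
  have hderiv : ρ' = V * (xGen * rhoPlus l + rhoPlus l * xGenᴴ) * Vᴴ := by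
    ext i j
    exact (hρ' i j).unique ((hasDerivAt_exp_smul_mul_mul_conjTranspose _ _ θ).matrix_apply i j)
  rw [xGen_mul_rhoPlus_add] at hderiv
  have hpq : (1 + 3 * l) / 4 + (1 - l) / 4 ≠ 0 := by linarith [hl.1]
  rw [hderiv, trace_mul_mul_mul_mul_comm,
    trace_mul_rotation_of_anticommutator_eq (rhoPlus_isHermitian l) (rhoPlus_mulVec_ψplus l)
      (rhoPlus_mulVec_φplus l) star_ψplus_dotProduct_ψplus star_φplus_dotProduct_φplus
      star_ψplus_dotProduct_φplus hpq _
      (anticommutator_eq_of_unitary_conj hV (hderiv.symm.trans hSLD))]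
  have h1l : (1 + l : ℂ) ≠ 0 := by exact_mod_cast (by linarith [hl.1] : 1 + l ≠ 0)
  rw [← Complex.ofReal_re (8 * l ^ 2 / (1 + l))]
  congr 1
  have hsum : (((1 + 3 * l) / 4 : ℝ) : ℂ) + (((1 - l) / 4 : ℝ) : ℂ) = (1 + l) / 2 := by
    push_cast; ring
  rw [hsum, mul_pow, Complex.I_sq]
  push_cast
  field_simp
  ring

/-- The SLD Fisher information of `θ ↦ (U_x(θ)⊗U_x(θ)) ρ_λ^+ (U_x(θ)⊗U_x(θ))†`
equals `8λ²/(1+λ)`, independently of `θ`. -/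
theorem sld_fisher_rhoPlus_xRotation
    (l : ℝ) (hl : l ∈ Set.Ioo (0 : ℝ) 1)
    (ρ : ℝ → Matrix (Fin 2 × Fin 2) (Fin 2 × Fin 2) ℂ)
    (hρ : ∀ t : ℝ, ρ t = (Ux t ⊗ₖ Ux t) * rhoPlus l * (Ux t ⊗ₖ Ux t)ᴴ)
    (θ : ℝ) (ρ' : Matrix (Fin 2 × Fin 2) (Fin 2 × Fin 2) ℂ)
    (hρ' : ∀ i j, HasDerivAt (fun t => ρ t i j) (ρ' i j) θ)
    (L : Matrix (Fin 2 × Fin 2) (Fin 2 × Fin 2) ℂ) (hL : L.IsHermitian)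
    (hSLD : ρ' = (1 / 2 : ℂ) • (ρ θ * L + L * ρ θ)) :
    ((L * ρ').trace).re = 8 * l ^ 2 / (1 + l) :=
  sld_fisher_rhoPlus_xRotation_general l hl ρ hρ θ ρ' hρ' L hSLD
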